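/- (Soundness of the slave product) Fix an fLTL\GU formula φ with Rec = {ξ_1,…,ξ_n}, and let P be the product of the slave automata LTSs for ξ_1,…,ξ_n. For every infinite word w and every R ⊆ Rec: if w ∈ L(P(R)) then R ⊆ R(w); consequently w ⊨ ⋀_{Fξ ∈ R} GFξ ∧ ⋀_{Gξ ∈ R} FGξ ∧ ⋀_{G^{⋈p}_ext ξ ∈ R} G^{⋈p}_ext ξ. -/

import Mathlib

open Filter

attribute [local instance] Classical.propDecidable

noncomputable section

namespace Paper

/-- Comparison extremes: limit inferior or limit superior. -/
inductive Ext where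
  | inf : Ext
  | sup : Ext

/-- Comparison operators `≥` and `>`. -/
inductive Cmp where
  | ge : Cmp
  | gt : Cmp

/-- Interpretation of a comparison operator on reals. -/
def Cmp.rel : Cmp → ℝ → ℝ → Prop
  | .ge, x, y => x ≥ y
  | .gt, x, y => x > y

/-- Cesàro averages of a real sequence. -/
def cesaro (q : ℕ → ℝ) (n : ℕ) : ℝ := (∑ j ∈ Finset.range n, q j) / (n : ℝ)

/-- `lr_inf`/`lr_sup`: liminf/limsup of the Cesàro averages. -/
def lr : Ext → (ℕ → ℝ) → ℝ
  | .inf, q => Filter.liminf (cesaro q) Filter.atTop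
  | .sup, q => Filter.limsup (cesaro q) Filter.atTop

/-- Real-valued indicator of a proposition. -/
def ind (P : Prop) : ℝ := if P then 1 else 0

/-- Formulas of frequency LTL (fLTL) over atomic propositions `Ap`,
in negation normal form. -/
inductive FLTL (Ap : Type) where
  | tt : FLTL Ap
  | ff : FLTL Ap
  | atom (a : Ap) : FLTL Ap
  | natom (a : Ap) : FLTL Ap
  | conj (φ ψ : FLTL Ap) : FLTL Ap
  | disj (φ ψ : FLTL Ap) : FLTL Ap
  | next (φ : FLTL Ap) : FLTL Ap
  | fut (φ : FLTL Ap) : FLTL Ap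
  | glob (φ : FLTL Ap) : FLTL Ap
  | untl (φ ψ : FLTL Ap) : FLTL Ap
  | freq (e : Ext) (c : Cmp) (p : ℚ) (φ : FLTL Ap) : FLTL Ap

/-- Infinite words over the alphabet `2^Ap`. -/
abbrev Word (Ap : Type) := ℕ → Set Ap

/-- The suffix `w^k` of an infinite word. -/
def suffixW {Ap : Type} (w : Word Ap) (k : ℕ) : Word Ap := fun i => w (k + i)

/-- Semantics of fLTL: `Sat φ w` means `w ⊨ φ`. -/
def Sat {Ap : Type} : FLTL Ap → Word Ap → Prop
  | .tt, _ => True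
  | .ff, _ => False
  | .atom a, w => a ∈ w 0
  | .natom a, w => a ∉ w 0
  | .conj φ ψ, w => Sat φ w ∧ Sat ψ w
  | .disj φ ψ, w => Sat φ w ∨ Sat ψ w
  | .next φ, w => Sat φ (suffixW w 1)
  | .fut φ, w => ∃ k, Sat φ (suffixW w k)
  | .glob φ, w => ∀ k, Sat φ (suffixW w k)
  | .untl φ ψ, w => ∃ k, Sat ψ (suffixW w k) ∧ ∀ j < k, Sat φ (suffixW w j)
  | .freq e c p φ, w => c.rel (lr e (fun i => ind (Sat φ (suffixW w i)))) (p : ℝ)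

/-- `U`-free formulas (the grammar `ξ` of the fragment). -/
def UFree {Ap : Type} : FLTL Ap → Prop
  | .conj φ ψ => UFree φ ∧ UFree ψ
  | .disj φ ψ => UFree φ ∧ UFree ψ
  | .next φ => UFree φ
  | .fut φ => UFree φ
  | .glob φ => UFree φ
  | .freq _ _ _ φ => UFree φ
  | .untl _ _ => False
  | _ => True

/-- The fragment fLTL∖GU: no `U` inside the scope of `G` or `G^{⋈p}_ext`. -/
def InFrag {Ap : Type} : FLTL Ap → Prop
  | .conj φ ψ => InFrag φ ∧ InFrag ψ
  | .disj φ ψ => InFrag φ ∧ InFrag ψ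
  | .next φ => InFrag φ
  | .fut φ => InFrag φ
  | .untl φ ψ => InFrag φ ∧ InFrag ψ
  | .glob φ => UFree φ
  | .freq _ _ _ φ => UFree φ
  | _ => True

/-- One-step unfolding `Unf`. -/
def unf {Ap : Type} : FLTL Ap → FLTL Ap
  | .conj φ ψ => .conj (unf φ) (unf ψ)
  | .disj φ ψ => .disj (unf φ) (unf ψ)
  | .fut φ => .disj (unf φ) (.next (.fut φ))
  | .glob φ => .conj (unf φ) (.next (.glob φ))
  | .untl φ ψ => .disj (unf ψ) (.conj (unf φ) (.next (.untl φ ψ)))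
  | .freq e c p φ => .conj .tt (.next (.freq e c p φ))
  | φ => φ

/-- The next-step operator `ψ[ν]` for a letter `ν ⊆ Ap`. -/
def step {Ap : Type} : FLTL Ap → Set Ap → FLTL Ap
  | .conj φ ψ, ν => .conj (step φ ν) (step ψ ν)
  | .disj φ ψ, ν => .disj (step φ ν) (step ψ ν)
  | .atom a, ν => if a ∈ ν then .tt else .ff
  | .natom a, ν => if a ∈ ν then .ff else .tt
  | .next φ, _ => φ
  | φ, _ => φ

/-- Non-Boolean formulas: those that are not conjunctions or disjunctions. -/
def nonBool {Ap : Type} : FLTL Ap → Prop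
  | .conj _ _ => False
  | .disj _ _ => False
  | _ => True

/-- Extension of a propositional assignment (on non-Boolean formulas)
through conjunction and disjunction; `tt` and `ff` get their truth values. -/
def evalA {Ap : Type} (A : FLTL Ap → Prop) : FLTL Ap → Prop
  | .tt => True
  | .ff => False
  | .conj φ ψ => evalA A φ ∧ evalA A ψ
  | .disj φ ψ => evalA A φ ∨ evalA A ψ
  | φ => A φ

/-- Propositional provability `Φ ⊢ ψ`. -/
def pproves {Ap : Type} (Φ : Set (FLTL Ap)) (ψ : FLTL Ap) : Prop :=
  ∀ A : FLTL Ap → Prop, (∀ χ ∈ Φ, evalA A χ) → evalA A ψ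

/-- Propositional equivalence `≡_P`. -/
def pequiv {Ap : Type} (φ ψ : FLTL Ap) : Prop :=
  pproves {φ} ψ ∧ pproves {ψ} φ

/-- The set of subformulas of a formula (including itself). -/
def subf {Ap : Type} : FLTL Ap → Set (FLTL Ap)
  | .conj φ ψ => insert (.conj φ ψ) (subf φ ∪ subf ψ)
  | .disj φ ψ => insert (.disj φ ψ) (subf φ ∪ subf ψ)
  | .next φ => insert (.next φ) (subf φ)
  | .fut φ => insert (.fut φ) (subf φ)
  | .glob φ => insert (.glob φ) (subf φ)
  | .untl φ ψ => insert (.untl φ ψ) (subf φ ∪ subf ψ)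
  | .freq e c p φ => insert (.freq e c p φ) (subf φ)
  | φ => {φ}

/-- `sf(φ)`: the set of non-Boolean subformulas of `φ`. -/
def sfSet {Ap : Type} (φ : FLTL Ap) : Set (FLTL Ap) := {ψ ∈ subf φ | nonBool ψ}

/-- Formulas of the shapes `Fξ`, `Gξ`, `G^{⋈p}_ext ξ`. -/
def isRecShape {Ap : Type} : FLTL Ap → Prop
  | .fut _ => True
  | .glob _ => True
  | .freq _ _ _ _ => True
  | _ => False

/-- `Rec`: the set of `F`-, `G`-, and `G^{⋈p}_ext`-subformulas of `φ`. -/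
def RecSet {Ap : Type} (φ : FLTL Ap) : Set (FLTL Ap) := {ψ ∈ subf φ | isRecShape ψ}

/-- The defining condition of membership in `R(w)`. -/
def RsatCond {Ap : Type} (w : Word Ap) : FLTL Ap → Prop
  | .fut ξ => Sat (.glob (.fut ξ)) w
  | .glob ξ => Sat (.fut (.glob ξ)) w
  | .freq e c p ξ => Sat (.freq e c p ξ) w
  | _ => False

/-- `R(w)`: elements of `Rec` eventually always satisfied on `w`. -/
def Rsat {Ap : Type} (φ : FLTL Ap) (w : Word Ap) : Set (FLTL Ap) :=
  {ψ ∈ RecSet φ | RsatCond w ψ}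

/-- The threshold `T(w)`: the smallest `T` such that for all `t ≥ T` every
formula of `R(w)` holds at `w^t` and every formula of `Rec ∖ R(w)` fails at `w^t`. -/
def threshold {Ap : Type} (φ : FLTL Ap) (w : Word Ap) : ℕ :=
  sInf {T : ℕ | ∀ t, T ≤ t →
    (∀ ψ ∈ Rsat φ w, Sat ψ (suffixW w t)) ∧
    (∀ ψ ∈ RecSet φ, ψ ∉ Rsat φ w → ¬ Sat ψ (suffixW w t))}

/-- Sinks of slave transition systems: `ψ[ν] = ψ` for every letter `ν`. -/
def isSink {Ap : Type} (ψ : FLTL Ap) : Prop := ∀ ν : Set Ap, step ψ ν = ψ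

/-- Run of the slave LTS `S(ξ)` on a finite word: undefined (`none`) as soon as
a transition from a sink would be needed. -/
def slaveRunList {Ap : Type} : FLTL Ap → List (Set Ap) → Option (FLTL Ap)
  | ψ, [] => some ψ
  | ψ, ν :: rest => if isSink ψ then none else slaveRunList (step ψ ν) rest

/-- The finite word `w[i] w[i+1] ⋯ w[i+len-1]`. -/
def segWord {Ap : Type} (w : Word Ap) (i len : ℕ) : List (Set Ap) :=
  (List.range len).map (fun k => w (i + k))

/-- `S(ξ)(w[i..j])`: the state of the slave LTS after reading `w[i]⋯w[j]`. -/
def readSeg {Ap : Type} (ξ : FLTL Ap) (w : Word Ap) (i j : ℕ) : Option (FLTL Ap) :=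
  slaveRunList ξ (segWord w i (j + 1 - i))

/-- The state, at time `n`, of the slave token born at time `b`
(having read `w[b]⋯w[n-1]`). -/
def tokState {Ap : Type} (ξ : FLTL Ap) (w : Word Ap) (b n : ℕ) : Option (FLTL Ap) :=
  slaveRunList ξ (segWord w b (n - b))

/-- `Sat(R)`: positions from which the slave run reaches an `R`-provable state. -/
def SatSet {Ap : Type} (R : Set (FLTL Ap)) (ξ : FLTL Ap) (w : Word Ap) : Set ℕ :=
  {i | ∃ j ≥ i, ∃ ψ, readSeg ξ w i j = some ψ ∧ pproves R ψ}

/-- The token (subset-construction) run of the slave automata for `ξ` on `w`: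
at each step all non-sink tokens move and a fresh token is put on `ξ`. -/
def tokenSet {Ap : Type} (ξ : FLTL Ap) (w : Word Ap) : ℕ → Set (FLTL Ap)
  | 0 => {ξ}
  | n + 1 => insert ξ ((fun ψ => step ψ (w n)) '' {ψ ∈ tokenSet ξ w n | ¬ isSink ψ})

/-- Acceptance of the Büchi slave automaton `S_GF(ξ,R)`:
infinitely often some token lies in an accepting (R-provable) sink. -/
def buchiAcc {Ap : Type} (R : Set (FLTL Ap)) (ξ : FLTL Ap) (w : Word Ap) : Prop :=
  ∃ᶠ n in atTop, ∃ ψ ∈ tokenSet ξ w n, isSink ψ ∧ pproves R ψ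

/-- Acceptance of the co-Büchi slave automaton `S_FG(ξ,R)`:
only finitely often some token lies in a rejecting (non-R-provable) sink. -/
def coBuchiAcc {Ap : Type} (R : Set (FLTL Ap)) (ξ : FLTL Ap) (w : Word Ap) : Prop :=
  ∀ᶠ n in atTop, ¬ ∃ ψ ∈ tokenSet ξ w n, isSink ψ ∧ ¬ pproves R ψ

/-- The counting function (state of the mean-payoff slave automaton) at time `n`:
the number of tokens currently in state `ψ`. -/
def tokenCount {Ap : Type} (ξ : FLTL Ap) (w : Word Ap) (n : ℕ) (ψ : FLTL Ap) : ℕ :=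
  ((Finset.range (n + 1)).filter (fun b => tokState ξ w b n = some ψ)).card

/-- The reward `r(R)` of a counting state: total number of tokens in
accepting (R-provable) sinks. -/
def mpRewardFn {Ap : Type} (R : Set (FLTL Ap)) (f : FLTL Ap → ℕ) : ℝ :=
  ∑' ψ : {χ : FLTL Ap // isSink χ ∧ pproves R χ}, (f ψ.1 : ℝ)

/-- Acceptance of the mean-payoff slave automaton `S_{G^{⋈p}_ext}(ξ,R)`. -/
def mpAcc {Ap : Type} (R : Set (FLTL Ap)) (ξ : FLTL Ap) (w : Word Ap)
    (e : Ext) (c : Cmp) (p : ℚ) : Prop :=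
  c.rel (lr e (fun n => mpRewardFn R (tokenCount ξ w n))) (p : ℝ)

/-- Acceptance of the slave automaton for a formula of `Rec`, with assumptions `R`. -/
def slaveAccept {Ap : Type} (R : Set (FLTL Ap)) (w : Word Ap) : FLTL Ap → Prop
  | .fut ξ => buchiAcc R ξ w
  | .glob ξ => coBuchiAcc R ξ w
  | .freq e c p ξ => mpAcc R ξ w e c p
  | _ => True

/-- `w ∈ L(P(R))`: the product of the slaves accepts `w` with the condition
`Acc(R) = ⋀_{ξ ∈ R} Acc_ξ(R)`. -/
def productAccept {Ap : Type} (R : Set (FLTL Ap)) (w : Word Ap) : Prop :=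
  ∀ ψ ∈ R, slaveAccept R w ψ

/-- The run of the master transition system on `w`. -/
def masterRun {Ap : Type} (φ : FLTL Ap) (w : Word Ap) : ℕ → FLTL Ap
  | 0 => φ
  | n + 1 => step (unf (masterRun φ w n)) (w n)

/-- The propositional substitution `χ[X/ff]`: replace each non-Boolean
formula belonging to `X` by `ff`. -/
def substFF {Ap : Type} (X : Set (FLTL Ap)) : FLTL Ap → FLTL Ap
  | .conj φ ψ => .conj (substFF X φ) (substFF X ψ)
  | .disj φ ψ => .disj (substFF X φ) (substFF X ψ)
  | φ => if φ ∈ X then .ff else φ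

/-- The master acceptance condition `Acc_M(R)`: eventually, the current master
formula is provable from `R` together with all tokens of the slaves of
`G`-formulas of `R`, with `Rec ∖ R` substituted by `ff`. -/
def masterAcc {Ap : Type} (φ : FLTL Ap) (R : Set (FLTL Ap)) (w : Word Ap) : Prop :=
  ∀ᶠ n in atTop,
    pproves
      (R ∪ ⋃ (ξ : FLTL Ap) (_ : FLTL.glob ξ ∈ R),
        substFF (RecSet φ \ R) '' tokenSet ξ w n)
      (masterRun φ w n)

/-- `w ∈ L(A)` for the final automaton `A` (master × slave product) of `φ`. -/
def finalAccept {Ap : Type} (φ : FLTL Ap) (w : Word Ap) : Prop :=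
  ∃ R ⊆ RecSet φ, masterAcc φ R w ∧ productAccept R w
/-!
Induction on the size of `ψ ∈ R`. The formulas of `R` smaller than `ψ = Fξ, Gξ, G^{⋈p}_ext ξ` are
in `R(w)` by induction, and as `R` is finite they all hold at every suffix `w^t` with `t ≥ T`. A
token of the slave for `ξ` born at `b ≥ T` that reaches a state `σ` with `R ⊢ σ` then witnesses
`w^b ⊨ ξ`: the assignment "`χ ∈ R`, or `w^t ⊨ χ` for a `χ` that is neither a `G`- nor a
`U`-formula" satisfies `R` at the time the token is read off, survives being pulled back along the
run, and at time `b` implies truth. Büchi acceptance yields such tokens born arbitrarily late,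
co-Büchi acceptance makes every late token one of them, and for mean payoff each token is counted
at most once (it leaves the run after reaching a sink), so the reward accumulated up to `n` is at
most `T` plus the number of positions `< n` satisfying `ξ`.
-/

open Topology

section Cesaro

lemma cesaro_nonneg {q : ℕ → ℝ} (hq : ∀ i, 0 ≤ q i) (n : ℕ) : 0 ≤ cesaro q n :=
  div_nonneg (Finset.sum_nonneg fun i _ => hq i) n.cast_nonneg

lemma cesaro_le_one {q : ℕ → ℝ} (hq : ∀ i, q i ≤ 1) (n : ℕ) : cesaro q n ≤ 1 := by
  rcases n.eq_zero_or_pos with rfl | hn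
  · simp [cesaro]
  · rw [cesaro, div_le_one (by positivity)]
    simpa using Finset.sum_le_sum fun i (_ : i ∈ Finset.range n) => hq i

lemma cesaro_shift (q : ℕ → ℝ) (n : ℕ) :
    cesaro (fun i => q (i + 1)) n = cesaro q n + (q n - q 0) / n := by
  have h := (Finset.sum_range_succ q n).symm.trans (Finset.sum_range_succ' q n)
  rw [cesaro, cesaro, ← add_div]
  congr 1
  linarith

lemma liminf_le_liminf_of_le_add {u v c : ℕ → ℝ} (hu : IsBoundedUnder (· ≥ ·) atTop u)
    (hv₀ : IsBoundedUnder (· ≥ ·) atTop v) (hv₁ : IsBoundedUnder (· ≤ ·) atTop v)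
    (hc : Tendsto c atTop (𝓝 0)) (h : ∀ᶠ n in atTop, u n ≤ v n + c n) :
    liminf u atTop ≤ liminf v atTop :=
  calc liminf u atTop ≤ liminf (c + v) atTop :=
        liminf_le_liminf (h.mono fun n hn => by simpa [add_comm] using hn) hu
          (isBoundedUnder_le_add hc.isBoundedUnder_le hv₁).isCoboundedUnder_ge
    _ ≤ limsup c atTop + liminf v atTop :=
        liminf_add_le hc.isBoundedUnder_ge hc.isBoundedUnder_le hv₀ hv₁.isCoboundedUnder_ge
    _ = liminf v atTop := by rw [hc.limsup_eq, zero_add]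

lemma limsup_le_limsup_of_le_add {u v c : ℕ → ℝ} (hu : IsBoundedUnder (· ≥ ·) atTop u)
    (hv₀ : IsBoundedUnder (· ≥ ·) atTop v) (hv₁ : IsBoundedUnder (· ≤ ·) atTop v)
    (hc : Tendsto c atTop (𝓝 0)) (h : ∀ᶠ n in atTop, u n ≤ v n + c n) :
    limsup u atTop ≤ limsup v atTop :=
  calc limsup u atTop ≤ limsup (v + c) atTop :=
        limsup_le_limsup h hu.isCoboundedUnder_le (isBoundedUnder_le_add hv₁ hc.isBoundedUnder_le)
    _ ≤ limsup v atTop + limsup c atTop :=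
        limsup_add_le hv₀ hv₁ hc.isCoboundedUnder_le hc.isBoundedUnder_le
    _ = limsup v atTop := by rw [hc.limsup_eq, add_zero]

lemma lr_le_lr_of_cesaro_le_add (e : Ext) {u v c : ℕ → ℝ} (hu : ∀ i, 0 ≤ u i)
    (hv₀ : ∀ i, 0 ≤ v i) (hv₁ : ∀ i, v i ≤ 1) (hc : Tendsto c atTop (𝓝 0))
    (h : ∀ᶠ n in atTop, cesaro u n ≤ cesaro v n + c n) : lr e u ≤ lr e v := by
  have hu' : IsBoundedUnder (· ≥ ·) atTop (cesaro u) := isBoundedUnder_of ⟨0, cesaro_nonneg hu⟩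
  have hv₀' : IsBoundedUnder (· ≥ ·) atTop (cesaro v) := isBoundedUnder_of ⟨0, cesaro_nonneg hv₀⟩
  have hv₁' : IsBoundedUnder (· ≤ ·) atTop (cesaro v) := isBoundedUnder_of ⟨1, cesaro_le_one hv₁⟩
  cases e
  · exact liminf_le_liminf_of_le_add hu' hv₀' hv₁' hc h
  · exact limsup_le_limsup_of_le_add hu' hv₀' hv₁' hc h

lemma lr_shift (e : Ext) {q : ℕ → ℝ} (h₀ : ∀ i, 0 ≤ q i) (h₁ : ∀ i, q i ≤ 1) :
    lr e (fun i => q (i + 1)) = lr e q := by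
  have hc : Tendsto (fun n : ℕ => (q n - q 0) / n) atTop (𝓝 0) := by
    refine squeeze_zero_norm (fun n => ?_) tendsto_one_div_atTop_nhds_zero_nat
    rw [Real.norm_eq_abs, abs_div, Nat.abs_cast]
    gcongr
    exact abs_sub_le_iff.2 ⟨by linarith [h₁ n, h₀ 0], by linarith [h₀ n, h₁ 0]⟩
  refine le_antisymm (lr_le_lr_of_cesaro_le_add e (fun i => h₀ _) h₀ h₁ hc
    (Eventually.of_forall fun n => (cesaro_shift q n).le)) ?_
  refine lr_le_lr_of_cesaro_le_add e h₀ (fun i => h₀ _) (fun i => h₁ _) (by simpa using hc.neg)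
    (Eventually.of_forall fun n => ?_)
  rw [cesaro_shift]
  simp

end Cesaro

section

variable {Ap : Type}

section Semantics

lemma suffixW_zero (w : Word Ap) : suffixW w 0 = w := by
  funext i; simp [suffixW]

lemma suffixW_suffixW (w : Word Ap) (a b : ℕ) :
    suffixW (suffixW w a) b = suffixW w (a + b) := by
  funext i; simp [suffixW, Nat.add_assoc]

lemma ind_nonneg (P : Prop) : 0 ≤ ind P := by unfold ind; split <;> norm_num

lemma ind_le_one (P : Prop) : ind P ≤ 1 := by unfold ind; split <;> norm_num

lemma Cmp.rel_of_le {c : Cmp} {x y z : ℝ} (h : c.rel x z) (hxy : x ≤ y) : c.rel y z := by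
  cases c
  exacts [le_trans h hxy, lt_of_lt_of_le h hxy]

lemma sat_freq_suffixW_one_iff {e : Ext} {c : Cmp} {p : ℚ} {χ : FLTL Ap} {w : Word Ap} :
    Sat (.freq e c p χ) (suffixW w 1) ↔ Sat (.freq e c p χ) w := by
  have h := lr_shift e (fun i => ind_nonneg (Sat χ (suffixW w i))) (fun i => ind_le_one _)
  simp only [Sat, suffixW_suffixW, Nat.add_comm 1] at h ⊢
  rw [h]

lemma sat_freq_suffixW_iff {e : Ext} {c : Cmp} {p : ℚ} {χ : FLTL Ap} {w : Word Ap} (t : ℕ) :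
    Sat (.freq e c p χ) (suffixW w t) ↔ Sat (.freq e c p χ) w := by
  induction t with
  | zero => rw [suffixW_zero]
  | succ t ih => rw [← suffixW_suffixW, sat_freq_suffixW_one_iff, ih]

lemma RsatCond.eventually_sat {w : Word Ap} {χ : FLTL Ap} (h : RsatCond w χ) :
    ∀ᶠ t in atTop, Sat χ (suffixW w t) := by
  cases χ with
  | fut ζ => exact Eventually.of_forall h
  | glob ζ =>
    obtain ⟨k, hk⟩ := h
    filter_upwards [eventually_ge_atTop k] with t ht m
    have := hk (t - k + m)
    rw [suffixW_suffixW] at this ⊢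
    rwa [← Nat.add_assoc, Nat.add_sub_cancel' ht] at this
  | freq e c p ζ => exact Eventually.of_forall fun t => (sat_freq_suffixW_iff t).2 h
  | _ => exact (h : False).elim

lemma finite_subf (φ : FLTL Ap) : (subf φ).Finite := by
  induction φ <;> simp_all [subf]

def IsThreshold (R : Set (FLTL Ap)) (w : Word Ap) (N T : ℕ) : Prop :=
  ∀ t, T ≤ t → ∀ χ ∈ R, sizeOf χ ≤ N → Sat χ (suffixW w t)

lemma exists_isThreshold {φ : FLTL Ap} {R : Set (FLTL Ap)} (hR : R ⊆ RecSet φ) {w : Word Ap}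
    {N : ℕ} (h : ∀ χ ∈ R, sizeOf χ ≤ N → RsatCond w χ) : ∃ T, IsThreshold R w N T := by
  have hfin : {χ ∈ R | sizeOf χ ≤ N}.Finite :=
    (finite_subf φ).subset fun χ hχ => (hR hχ.1).1
  obtain ⟨T, hT⟩ := eventually_atTop.1
    (hfin.eventually_all.2 fun χ hχ => (h χ hχ.1 hχ.2).eventually_sat)
  exact ⟨T, fun t ht χ hχ hN => hT t ht χ ⟨hχ, hN⟩⟩

end Semantics

section SlaveRuns

def slaveWeight : FLTL Ap → ℕ
  | .atom _ => 1
  | .natom _ => 1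
  | .conj φ ψ => slaveWeight φ + slaveWeight ψ
  | .disj φ ψ => slaveWeight φ + slaveWeight ψ
  | .next φ => slaveWeight φ + 1
  | _ => 0

lemma slaveWeight_step_le (ψ : FLTL Ap) (ν : Set Ap) :
    slaveWeight (step ψ ν) ≤ slaveWeight ψ := by
  induction ψ with
  | conj φ χ ihφ ihχ | disj φ χ ihφ ihχ => simp only [step, slaveWeight]; omega
  | atom a | natom a => simp only [step]; split <;> simp [slaveWeight]
  | next φ => simp [step, slaveWeight]
  | _ => rfl

lemma slaveWeight_step_lt {ψ : FLTL Ap} (h : ¬ isSink ψ) (ν : Set Ap) :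
    slaveWeight (step ψ ν) < slaveWeight ψ := by
  induction ψ with
  | conj φ χ ihφ ihχ | disj φ χ ihφ ihχ =>
    have := slaveWeight_step_le φ ν
    have := slaveWeight_step_le χ ν
    by_cases hφ : isSink φ
    · have := ihχ fun hχ => h fun ν => by simp [step, hφ ν, hχ ν]
      simp only [step, slaveWeight]; omega
    · have := ihφ hφ
      simp only [step, slaveWeight]; omega
  | atom a | natom a => simp only [step]; split <;> simp [slaveWeight]
  | next φ => simp [step, slaveWeight]
  | _ => exact absurd (fun _ => rfl) h

def slaveMove (ν : Set Ap) (χ : FLTL Ap) : Option (FLTL Ap) :=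
  if isSink χ then none else some (step χ ν)

@[simp]
lemma slaveMove_eq_some_iff {ν : Set Ap} {χ σ : FLTL Ap} :
    slaveMove ν χ = some σ ↔ ¬ isSink χ ∧ step χ ν = σ := by
  unfold slaveMove; split <;> simp_all

lemma slaveRunList_append_singleton (ψ : FLTL Ap) (l : List (Set Ap)) (ν : Set Ap) :
    slaveRunList ψ (l ++ [ν]) = (slaveRunList ψ l).bind (slaveMove ν) := by
  induction l generalizing ψ with
  | nil => simp [slaveRunList, slaveMove]
  | cons μ l ih => simp only [List.cons_append, slaveRunList]; split <;> simp [ih]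

variable (ξ : FLTL Ap) (w : Word Ap)

lemma tokState_self (b : ℕ) : tokState ξ w b b = some ξ := by
  simp [tokState, segWord, slaveRunList]

lemma tokState_succ {b n : ℕ} (h : b ≤ n) :
    tokState ξ w b (n + 1) = (tokState ξ w b n).bind (slaveMove (w n)) := by
  have hseg : segWord w b (n + 1 - b) = segWord w b (n - b) ++ [w n] := by
    simp [Nat.sub_add_comm h, segWord, List.range_succ, Nat.add_sub_cancel' h]
  rw [tokState, tokState, hseg, slaveRunList_append_singleton]

lemma exists_tokState_isSink (b : ℕ) :
    ∃ n, b ≤ n ∧ ∃ σ, tokState ξ w b n = some σ ∧ isSink σ := by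
  by_contra! hlive
  have hdecay : ∀ k, ∃ σ, tokState ξ w b (b + k) = some σ ∧ slaveWeight σ + k ≤ slaveWeight ξ := by
    intro k
    induction k with
    | zero => exact ⟨ξ, tokState_self ξ w b, le_rfl⟩
    | succ k ih =>
      obtain ⟨σ, hσ, hk⟩ := ih
      have hs := hlive (b + k) (by omega) σ hσ
      refine ⟨step σ (w (b + k)), ?_, ?_⟩
      · simp [← Nat.add_assoc, tokState_succ ξ w (Nat.le_add_right b k), hσ, hs]
      · have := slaveWeight_step_lt hs (w (b + k)); omega
  obtain ⟨σ, -, h⟩ := hdecay (slaveWeight ξ + 1)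
  omega

variable {ξ w}

lemma tokState_eq_none_of_isSink {b n m : ℕ} {σ : FLTL Ap} (hb : b ≤ n)
    (h : tokState ξ w b n = some σ) (hs : isSink σ) (hnm : n < m) : tokState ξ w b m = none := by
  induction m, hnm using Nat.le_induction with
  | base => simp [tokState_succ ξ w hb, h, slaveMove, hs]
  | succ m hm ih => rw [tokState_succ ξ w (by omega), ih]; rfl

lemma eq_of_tokState_isSink {b n n' : ℕ} {σ σ' : FLTL Ap} (hb : b ≤ n) (hb' : b ≤ n')
    (h : tokState ξ w b n = some σ) (hs : isSink σ)
    (h' : tokState ξ w b n' = some σ') (hs' : isSink σ') : n = n' := by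
  rcases lt_trichotomy n n' with hlt | heq | hlt
  · simp [tokState_eq_none_of_isSink hb h hs hlt] at h'
  · exact heq
  · simp [tokState_eq_none_of_isSink hb' h' hs' hlt] at h

lemma finite_setOf_tokState_isSink (b : ℕ) :
    {n | b ≤ n ∧ ∃ σ, tokState ξ w b n = some σ ∧ isSink σ}.Finite :=
  Set.Subsingleton.finite fun _ ⟨hb, _, h, hs⟩ _ ⟨hb', _, h', hs'⟩ =>
    eq_of_tokState_isSink hb hb' h hs h' hs'

lemma mem_tokenSet_iff {n : ℕ} {σ : FLTL Ap} :
    σ ∈ tokenSet ξ w n ↔ ∃ b ≤ n, tokState ξ w b n = some σ := by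
  induction n generalizing σ with
  | zero => simp [tokenSet, tokState_self, eq_comm]
  | succ n ih =>
    simp only [tokenSet, Set.mem_insert_iff, Set.mem_image, Set.mem_ofPred_eq, ih]
    constructor
    · rintro (rfl | ⟨χ, ⟨⟨b, hb, hχ⟩, hs⟩, rfl⟩)
      · exact ⟨n + 1, le_rfl, tokState_self _ w _⟩
      · exact ⟨b, by omega, by simp [tokState_succ ξ w hb, hχ, hs]⟩
    · rintro ⟨b, hb, h⟩
      rcases hb.lt_or_eq with hb | rfl
      · rw [tokState_succ ξ w (by omega), Option.bind_eq_some_iff] at h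
        obtain ⟨χ, hχ, hs, rfl⟩ := by simpa using h
        exact Or.inr ⟨χ, ⟨⟨b, by omega, hχ⟩, hs⟩, rfl⟩
      · simp_all [tokState_self]

end SlaveRuns

section TokenSoundness

lemma evalA_of_isRecShape (A : FLTL Ap → Prop) {χ : FLTL Ap} (h : isRecShape χ) :
    evalA A χ = A χ := by
  cases χ <;> first | rfl | exact (h : False).elim

def isGlobOrUntl : FLTL Ap → Prop
  | .glob _ => True
  | .untl _ _ => True
  | _ => False

/-- `G`- and `U`-formulas true at `t + 1` need not be true at `t`, so they are only trusted when
they are assumed in `R`. -/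
def tokenAssignment (R : Set (FLTL Ap)) (w : Word Ap) (N t : ℕ) (χ : FLTL Ap) : Prop :=
  sizeOf χ ≤ N → χ ∈ R ∨ (Sat χ (suffixW w t) ∧ ¬ isGlobOrUntl χ)

variable {R : Set (FLTL Ap)} {w : Word Ap} {N T : ℕ}

lemma sat_of_evalA_tokenAssignment (hT : IsThreshold R w N T) {t : ℕ} (ht : T ≤ t)
    {χ : FLTL Ap} (hχ : sizeOf χ ≤ N) (h : evalA (tokenAssignment R w N t) χ) :
    Sat χ (suffixW w t) := by
  induction χ with
  | tt => trivial
  | ff => exact h.elim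
  | conj φ ψ ihφ ihψ =>
    simp only [FLTL.conj.sizeOf_spec] at hχ
    exact ⟨ihφ (by omega) h.1, ihψ (by omega) h.2⟩
  | disj φ ψ ihφ ihψ =>
    simp only [FLTL.disj.sizeOf_spec] at hχ
    exact h.imp (ihφ (by omega)) (ihψ (by omega))
  | _ => exact (h hχ).elim (fun hR => hT t ht _ hR hχ) And.left

lemma evalA_tokenAssignment_of_step (hT : IsThreshold R w N T) {t : ℕ} (ht : T ≤ t + 1)
    (χ : FLTL Ap) (h : evalA (tokenAssignment R w N (t + 1)) (step χ (w t))) :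
    evalA (tokenAssignment R w N t) χ := by
  induction χ with
  | tt | ff => exact h
  | conj φ ψ ihφ ihψ => exact ⟨ihφ h.1, ihψ h.2⟩
  | disj φ ψ ihφ ihψ => exact h.imp ihφ ihψ
  | atom a | natom a =>
    refine fun _ => Or.inr ⟨?_, id⟩
    by_cases ha : a ∈ w t <;> simp_all [step, evalA, Sat, suffixW]
  | next φ =>
    refine fun hN => Or.inr ⟨?_, id⟩
    have hφ := sat_of_evalA_tokenAssignment hT ht (χ := φ) (by simp at hN; omega) h
    rwa [Sat, suffixW_suffixW]
  | fut φ =>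
    refine fun hN => (h hN).imp_right fun ⟨⟨k, hk⟩, _⟩ => ⟨⟨k + 1, ?_⟩, id⟩
    rw [suffixW_suffixW] at hk ⊢
    rwa [show t + (k + 1) = t + 1 + k by omega]
  | glob φ | untl φ _ => exact fun hN => (h hN).imp_right fun ⟨_, hGU⟩ => (hGU trivial).elim
  | freq e c p φ =>
    refine fun hN => (h hN).imp_right fun ⟨hφ, hGU⟩ => ⟨?_, hGU⟩
    exact (sat_freq_suffixW_iff t).2 ((sat_freq_suffixW_iff (t + 1)).1 hφ)

lemma evalA_tokenAssignment_of_tokState (hT : IsThreshold R w N T) {ξ σ : FLTL Ap} {b n : ℕ}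
    (hb : T ≤ b) (hbn : b ≤ n) (hrun : tokState ξ w b n = some σ)
    (h : evalA (tokenAssignment R w N n) σ) : evalA (tokenAssignment R w N b) ξ := by
  induction n, hbn using Nat.le_induction generalizing σ with
  | base =>
    rw [tokState_self, Option.some.injEq] at hrun
    rwa [hrun]
  | succ n hbn ih =>
    rw [tokState_succ ξ w hbn, Option.bind_eq_some_iff] at hrun
    obtain ⟨χ, hχ, hmove⟩ := hrun
    obtain ⟨-, rfl⟩ := slaveMove_eq_some_iff.1 hmove
    exact ih hχ (evalA_tokenAssignment_of_step hT (by omega) χ h)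

theorem sat_of_tokState_pproves (hR : ∀ χ ∈ R, isRecShape χ) {ξ σ : FLTL Ap}
    (hT : IsThreshold R w (sizeOf ξ) T) {b n : ℕ} (hb : T ≤ b) (hbn : b ≤ n)
    (hrun : tokState ξ w b n = some σ) (hσ : pproves R σ) : Sat ξ (suffixW w b) := by
  have hRA : ∀ χ ∈ R, evalA (tokenAssignment R w (sizeOf ξ) n) χ := fun χ hχ => by
    rw [evalA_of_isRecShape _ (hR χ hχ)]
    exact fun _ => Or.inl hχ
  exact sat_of_evalA_tokenAssignment hT hb le_rfl
    (evalA_tokenAssignment_of_tokState hT hb hbn hrun (hσ _ hRA))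

end TokenSoundness

section BuchiCoBuchi

variable {R : Set (FLTL Ap)} {ξ : FLTL Ap} {w : Word Ap} {T : ℕ}

lemma exists_birth_ge_of_buchiAcc (hacc : buchiAcc R ξ w) (K : ℕ) :
    ∃ b, K ≤ b ∧ ∃ n, b ≤ n ∧ ∃ σ, tokState ξ w b n = some σ ∧ isSink σ ∧ pproves R σ := by
  have hfin : (⋃ b < K, {n | b ≤ n ∧ ∃ σ, tokState ξ w b n = some σ ∧ isSink σ}).Finite :=
    (Set.finite_lt_nat K).biUnion fun b _ => finite_setOf_tokState_isSink b
  have hlate := hfin.eventually_cofinite_notMem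
  rw [Nat.cofinite_eq_atTop] at hlate
  obtain ⟨n, ⟨σ, hσ, hs, hp⟩, hn⟩ := (hacc.and_eventually hlate).exists
  obtain ⟨b, hbn, hrun⟩ := mem_tokenSet_iff.1 hσ
  refine ⟨b, ?_, n, hbn, σ, hrun, hs, hp⟩
  by_contra! hbK
  exact hn (Set.mem_biUnion hbK ⟨hbn, σ, hrun, hs⟩)

theorem sat_glob_fut_of_buchiAcc (hR : ∀ χ ∈ R, isRecShape χ)
    (hT : IsThreshold R w (sizeOf ξ) T) (hacc : buchiAcc R ξ w) : Sat (.glob (.fut ξ)) w := by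
  intro k
  obtain ⟨b, hb, n, hbn, σ, hrun, -, hσ⟩ := exists_birth_ge_of_buchiAcc hacc (max k T)
  refine ⟨b - k, ?_⟩
  rw [suffixW_suffixW, Nat.add_sub_cancel' (by omega)]
  exact sat_of_tokState_pproves hR hT (by omega) hbn hrun hσ

theorem sat_fut_glob_of_coBuchiAcc (hR : ∀ χ ∈ R, isRecShape χ)
    (hT : IsThreshold R w (sizeOf ξ) T) (hacc : coBuchiAcc R ξ w) : Sat (.fut (.glob ξ)) w := by
  obtain ⟨M, hM⟩ := eventually_atTop.1 hacc
  refine ⟨max T M, fun m => ?_⟩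
  rw [suffixW_suffixW]
  obtain ⟨n, hbn, σ, hrun, hs⟩ := exists_tokState_isSink ξ w (max T M + m)
  have hσ : pproves R σ := by
    by_contra hσ
    exact hM n (by omega) ⟨σ, mem_tokenSet_iff.2 ⟨_, hbn, hrun⟩, hs, hσ⟩
  exact sat_of_tokState_pproves hR hT (by omega) hbn hrun hσ

end BuchiCoBuchi

section MeanPayoff

variable (R : Set (FLTL Ap)) (ξ : FLTL Ap) (w : Word Ap)

def acceptedTokens (n : ℕ) : Finset ℕ :=
  (Finset.range (n + 1)).filter fun b => ∃ σ, tokState ξ w b n = some σ ∧ isSink σ ∧ pproves R σ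

lemma hasSum_tokState_eq (b n : ℕ) :
    HasSum (fun x : {χ : FLTL Ap // isSink χ ∧ pproves R χ} =>
        if tokState ξ w b n = some x.1 then (1 : ℝ) else 0)
      (if ∃ σ, tokState ξ w b n = some σ ∧ isSink σ ∧ pproves R σ then 1 else 0) := by
  by_cases h : ∃ σ, tokState ξ w b n = some σ ∧ isSink σ ∧ pproves R σ
  · obtain ⟨σ, hσ, hacc⟩ := h
    convert hasSum_ite_eq (⟨σ, hacc⟩ : {χ : FLTL Ap // isSink χ ∧ pproves R χ}) (1 : ℝ) using 2
    · simp [hσ, Subtype.ext_iff, eq_comm]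
    · simp [hσ, hacc]
  · rw [if_neg h]
    convert hasSum_zero with x
    rw [if_neg fun hx => h ⟨x.1, hx, x.2⟩]

lemma mpRewardFn_tokenCount (n : ℕ) :
    mpRewardFn R (tokenCount ξ w n) = (acceptedTokens R ξ w n).card := by
  have hsum := hasSum_sum fun b (_ : b ∈ Finset.range (n + 1)) => hasSum_tokState_eq R ξ w b n
  simp only [Finset.sum_boole] at hsum
  rw [acceptedTokens, ← hsum.tsum_eq, mpRewardFn]
  simp [tokenCount]

variable {R ξ w} {T : ℕ}

lemma sum_card_acceptedTokens_le (hR : ∀ χ ∈ R, isRecShape χ)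
    (hT : IsThreshold R w (sizeOf ξ) T) (n : ℕ) :
    ∑ m ∈ Finset.range n, (acceptedTokens R ξ w m).card
      ≤ T + ((Finset.range n).filter fun b => Sat ξ (suffixW w b)).card := by
  rw [← Finset.card_sigma]
  refine (Finset.card_le_card_of_injOn Sigma.snd
    (t := Finset.range T ∪ (Finset.range n).filter fun b => Sat ξ (suffixW w b)) ?_ ?_).trans
    ((Finset.card_union_le _ _).trans_eq (by rw [Finset.card_range]))
  · rintro ⟨m, b⟩ hmb
    simp only [Finset.coe_sigma, Set.mem_sigma_iff, Finset.mem_coe, Finset.mem_range,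
      acceptedTokens, Finset.mem_filter] at hmb
    obtain ⟨hm, hb, σ, hrun, -, hσ⟩ := hmb
    by_cases hbT : b < T
    · simp [hbT]
    · simp only [Finset.coe_union, Finset.coe_range, Finset.coe_filter, Set.mem_union,
        Set.mem_Iio, Set.mem_ofPred_eq]
      exact Or.inr ⟨Finset.mem_range.2 (by omega),
        sat_of_tokState_pproves hR hT (by omega) (by omega) hrun hσ⟩
  · rintro ⟨m, b⟩ hmb ⟨m', b'⟩ hmb' (rfl : b = b')
    simp only [Finset.coe_sigma, Set.mem_sigma_iff, Finset.mem_coe, acceptedTokens,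
      Finset.mem_filter, Finset.mem_range] at hmb hmb'
    obtain ⟨-, hb, σ, hrun, hs, -⟩ := hmb
    obtain ⟨-, hb', σ', hrun', hs', -⟩ := hmb'
    have hm : m = m' := eq_of_tokState_isSink (by omega) (by omega) hrun hs hrun' hs'
    rw [hm]

theorem sat_freq_of_mpAcc (hR : ∀ χ ∈ R, isRecShape χ) (hT : IsThreshold R w (sizeOf ξ) T)
    {e : Ext} {c : Cmp} {p : ℚ} (hacc : mpAcc R ξ w e c p) : Sat (.freq e c p ξ) w := by
  have hsum : ∀ n, ∑ m ∈ Finset.range n, mpRewardFn R (tokenCount ξ w m)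
      ≤ ∑ m ∈ Finset.range n, ind (Sat ξ (suffixW w m)) + T := by
    intro n
    simp only [mpRewardFn_tokenCount, ind, Finset.sum_boole]
    exact_mod_cast (sum_card_acceptedTokens_le hR hT n).trans_eq (Nat.add_comm _ _)
  refine Cmp.rel_of_le hacc (lr_le_lr_of_cesaro_le_add e (fun m => ?_) (fun i => ind_nonneg _)
    (fun i => ind_le_one _) (tendsto_const_div_atTop_nhds_zero_nat (T : ℝ))
    (Eventually.of_forall fun n => ?_))
  · rw [mpRewardFn_tokenCount]
    positivity
  · rw [cesaro, cesaro, ← add_div]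
    gcongr
    exact hsum n

end MeanPayoff

theorem rsatCond_of_slaveAccept {φ : FLTL Ap} {R : Set (FLTL Ap)} (hR : R ⊆ RecSet φ)
    {w : Word Ap} {ψ : FLTL Ap} (hψ : isRecShape ψ)
    (hsmall : ∀ χ ∈ R, sizeOf χ < sizeOf ψ → RsatCond w χ) (hacc : slaveAccept R w ψ) :
    RsatCond w ψ := by
  have hshape : ∀ χ ∈ R, isRecShape χ := fun χ hχ => (hR hχ).2
  have hthreshold : ∀ ξ : FLTL Ap, sizeOf ξ < sizeOf ψ → ∃ T, IsThreshold R w (sizeOf ξ) T :=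
    fun ξ hξ => exists_isThreshold hR fun χ hχ hN => hsmall χ hχ (by omega)
  cases ψ with
  | fut ξ =>
    obtain ⟨T, hT⟩ := hthreshold ξ (by simp)
    exact sat_glob_fut_of_buchiAcc hshape hT hacc
  | glob ξ =>
    obtain ⟨T, hT⟩ := hthreshold ξ (by simp)
    exact sat_fut_glob_of_coBuchiAcc hshape hT hacc
  | freq e c p ξ =>
    obtain ⟨T, hT⟩ := hthreshold ξ (by simp)
    exact sat_freq_of_mpAcc hshape hT hacc
  | _ => exact (hψ : False).elim

end

theorem slave_product_sound_general {Ap : Type} (φ : FLTL Ap)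
    (w : Word Ap) (R : Set (FLTL Ap)) (hR : R ⊆ RecSet φ)
    (hacc : productAccept R w) :
    R ⊆ Rsat φ w ∧ ∀ ψ ∈ R, RsatCond w ψ := by
  have hcond : ∀ ψ ∈ R, RsatCond w ψ := by
    intro ψ
    induction h : sizeOf ψ using Nat.strong_induction_on generalizing ψ with
    | _ s ih =>
      intro hψ
      subst h
      exact rsatCond_of_slaveAccept hR (hR hψ).2
        (fun χ hχ hlt => ih _ hlt χ rfl hχ) (hacc ψ hψ)
  exact ⟨fun ψ hψ => ⟨hR hψ, hcond ψ hψ⟩, hcond⟩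

/-- Lemma 5 (soundness of the slave product): assumptions proved by the
product are indeed satisfied on the word. -/
theorem slave_product_sound {Ap : Type} [Fintype Ap] (φ : FLTL Ap) (hφ : InFrag φ)
    (w : Word Ap) (R : Set (FLTL Ap)) (hR : R ⊆ RecSet φ)
    (hacc : productAccept R w) :
    R ⊆ Rsat φ w ∧ ∀ ψ ∈ R, RsatCond w ψ :=
  slave_product_sound_general φ w R hR hacc

end Paper
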